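/- arXiv:2207.07406 — 4 statements merged into one kernel-verified Lean document; each statement's English description precedes it below -/
import Mathlib

section
/- Let H be a complex inner product space (inner product ⟨·,·⟩ antilinear in the first and linear in the second argument), D ⊆ H a subspace, and a, b, a†, b† : H → H linear maps each mapping D into D, satisfying ⟨a† f, g⟩ = ⟨f, a g⟩ and ⟨b† f, g⟩ = ⟨f, b g⟩ for all f, g ∈ D, and a(b f) − b(a f) = f for all f ∈ D. Suppose φ₀, Ψ₀ ∈ D are nonzero with a φ₀ = 0, b† Ψ₀ = 0 and ⟨φ₀, Ψ₀⟩ = 1. Define φₙ = (1/√(n!)) bⁿ φ₀ and Ψₙ = (1/√(n!)) (a†)ⁿ Ψ₀. Then ⟨φₙ, Ψₘ⟩ = δ_{n,m} for all n, m ≥ 0. -/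
open scoped InnerProductSpace

/-!
The lowering operator `a` acts on the raised vectors `bⁿ φ₀` as a derivative,
`a (bⁿ⁺¹ φ₀) = (n + 1) bⁿ φ₀`, because `[a, b] = 1` and `a φ₀ = 0`. Moving one factor `a†` across the
inner product as `a` therefore gives the recursion
`⟪bⁿ⁺¹ φ₀, (a†)ᵐ⁺¹ Ψ₀⟫ = (n + 1) ⟪bⁿ φ₀, (a†)ᵐ Ψ₀⟫`, while all pairings with `n = 0` or `m = 0`
other than `⟪φ₀, Ψ₀⟫ = 1` vanish because `a φ₀ = 0` and `b† Ψ₀ = 0`. Hence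
`⟪bⁿ φ₀, (a†)ᵐ Ψ₀⟫ = δₙₘ n!`, and the factors `1/√(n!)` normalize this to `δₙₘ`.
-/

theorem Module.End.apply_pow_succ_apply_eq_succ_nsmul {R M : Type*} [Ring R] [AddCommGroup M]
    [Module R M] {D : Submodule R M} {a b : Module.End R M} (hbD : ∀ x ∈ D, b x ∈ D)
    (hcomm : ∀ x ∈ D, a (b x) - b (a x) = x) {φ₀ : M} (hφ₀D : φ₀ ∈ D) (haφ₀ : a φ₀ = 0)
    (n : ℕ) : a ((b ^ (n + 1)) φ₀) = (n + 1) • (b ^ n) φ₀ := by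
  induction n with
  | zero => simpa [haφ₀] using hcomm φ₀ hφ₀D
  | succ k ih =>
    have hcomm_k := hcomm _ (Module.End.pow_apply_mem_of_forall_mem (k + 1) hbD _ hφ₀D)
    rw [pow_succ' b (k + 1), Module.End.mul_apply, eq_add_of_sub_eq hcomm_k, ih, map_nsmul,
      ← Module.End.mul_apply, ← pow_succ', succ_nsmul' _ (k + 1)]

section PseudoBosons

variable {𝕜 E : Type*} [RCLike 𝕜] [NormedAddCommGroup E] [InnerProductSpace 𝕜 E]
  {D : Submodule 𝕜 E} {a b ad bd : E →ₗ[𝕜] E}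

theorem inner_pow_apply_pow_apply_eq_ite_factorial
    (hbD : ∀ f ∈ D, b f ∈ D) (hadD : ∀ f ∈ D, ad f ∈ D)
    (hadj_a : ∀ f ∈ D, ∀ g ∈ D, ⟪ad f, g⟫_𝕜 = ⟪f, a g⟫_𝕜)
    (hadj_b : ∀ f ∈ D, ∀ g ∈ D, ⟪bd f, g⟫_𝕜 = ⟪f, b g⟫_𝕜)
    (hcomm : ∀ f ∈ D, a (b f) - b (a f) = f)
    {φ₀ Ψ₀ : E} (hφ₀D : φ₀ ∈ D) (hΨ₀D : Ψ₀ ∈ D) (haφ₀ : a φ₀ = 0) (hbdΨ₀ : bd Ψ₀ = 0)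
    (hnorm : ⟪φ₀, Ψ₀⟫_𝕜 = 1) (n m : ℕ) :
    ⟪(b ^ n) φ₀, (ad ^ m) Ψ₀⟫_𝕜 = if n = m then (n.factorial : 𝕜) else 0 := by
  have hbnD (k : ℕ) := Module.End.pow_apply_mem_of_forall_mem k hbD _ hφ₀D
  have hadmD (k : ℕ) := Module.End.pow_apply_mem_of_forall_mem k hadD _ hΨ₀D
  induction m generalizing n with
  | zero =>
    cases n with
    | zero => simpa using hnorm
    | succ k =>
      rw [pow_succ', Module.End.mul_apply, ← inner_conj_symm, pow_zero, Module.End.one_apply,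
        ← hadj_b Ψ₀ hΨ₀D _ (hbnD k), hbdΨ₀]
      simp
  | succ m ih =>
    have hmove : ⟪(b ^ n) φ₀, (ad ^ (m + 1)) Ψ₀⟫_𝕜 = ⟪a ((b ^ n) φ₀), (ad ^ m) Ψ₀⟫_𝕜 := by
      rw [pow_succ', Module.End.mul_apply, ← inner_conj_symm, hadj_a _ (hadmD m) _ (hbnD n),
        inner_conj_symm]
    rw [hmove]
    cases n with
    | zero => simp [haφ₀]
    | succ k =>
      rw [Module.End.apply_pow_succ_apply_eq_succ_nsmul hbD hcomm hφ₀D haφ₀, inner_smul_left_eq_smul,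
        ih k]
      by_cases hkm : k = m
      · subst hkm
        simp [Nat.factorial_succ]
      · simp [hkm]

end PseudoBosons

theorem stmt1_general (H : Type*) [NormedAddCommGroup H] [InnerProductSpace ℂ H]
    (D : Submodule ℂ H) (a b ad bd : H →ₗ[ℂ] H)
    (hbD : ∀ f ∈ D, b f ∈ D)
    (hadD : ∀ f ∈ D, ad f ∈ D)
    (hadj_a : ∀ f ∈ D, ∀ g ∈ D, ⟪ad f, g⟫_ℂ = ⟪f, a g⟫_ℂ)
    (hadj_b : ∀ f ∈ D, ∀ g ∈ D, ⟪bd f, g⟫_ℂ = ⟪f, b g⟫_ℂ)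
    (hcomm : ∀ f ∈ D, a (b f) - b (a f) = f)
    (φ₀ Ψ₀ : H) (hφ₀D : φ₀ ∈ D) (hΨ₀D : Ψ₀ ∈ D)
    (haφ₀ : a φ₀ = 0) (hbdΨ₀ : bd Ψ₀ = 0)
    (hnorm : ⟪φ₀, Ψ₀⟫_ℂ = 1)
    (φ Ψ : ℕ → H)
    (hφ : ∀ n : ℕ, φ n = ((Real.sqrt n.factorial : ℂ))⁻¹ • ((b ^ n) φ₀))
    (hΨ : ∀ n : ℕ, Ψ n = ((Real.sqrt n.factorial : ℂ))⁻¹ • ((ad ^ n) Ψ₀)) :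
    ∀ n m : ℕ, ⟪φ n, Ψ m⟫_ℂ = if n = m then 1 else 0 := by
  intro n m
  rw [hφ, hΨ, inner_smul_left, inner_smul_right, inner_pow_apply_pow_apply_eq_ite_factorial
    hbD hadD hadj_a hadj_b hcomm hφ₀D hΨ₀D haφ₀ hbdΨ₀ hnorm]
  split_ifs with hnm
  · subst hnm
    have hsqrt : (Real.sqrt n.factorial : ℂ) ^ 2 = n.factorial := by
      rw [← Complex.ofReal_pow, Real.sq_sqrt (Nat.cast_nonneg _), Complex.ofReal_natCast]
    have hsqrt_ne : (Real.sqrt n.factorial : ℂ) ≠ 0 := by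
      exact_mod_cast (Real.sqrt_pos.mpr (Nat.cast_pos.mpr n.factorial_pos)).ne'
    rw [map_inv₀, Complex.conj_ofReal, ← hsqrt]
    field_simp
  · simp

/-- biorthonormality of the pseudo-bosonic families
`φₙ = (1/√(n!)) bⁿ φ₀` and `Ψₙ = (1/√(n!)) (a†)ⁿ Ψ₀`. -/
theorem stmt1 (H : Type*) [NormedAddCommGroup H] [InnerProductSpace ℂ H]
    (D : Submodule ℂ H) (a b ad bd : H →ₗ[ℂ] H)
    (haD : ∀ f ∈ D, a f ∈ D) (hbD : ∀ f ∈ D, b f ∈ D)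
    (hadD : ∀ f ∈ D, ad f ∈ D) (hbdD : ∀ f ∈ D, bd f ∈ D)
    (hadj_a : ∀ f ∈ D, ∀ g ∈ D, ⟪ad f, g⟫_ℂ = ⟪f, a g⟫_ℂ)
    (hadj_b : ∀ f ∈ D, ∀ g ∈ D, ⟪bd f, g⟫_ℂ = ⟪f, b g⟫_ℂ)
    (hcomm : ∀ f ∈ D, a (b f) - b (a f) = f)
    (φ₀ Ψ₀ : H) (hφ₀D : φ₀ ∈ D) (hΨ₀D : Ψ₀ ∈ D)
    (hφ₀ne : φ₀ ≠ 0) (hΨ₀ne : Ψ₀ ≠ 0)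
    (haφ₀ : a φ₀ = 0) (hbdΨ₀ : bd Ψ₀ = 0)
    (hnorm : ⟪φ₀, Ψ₀⟫_ℂ = 1)
    (φ Ψ : ℕ → H)
    (hφ : ∀ n : ℕ, φ n = ((Real.sqrt n.factorial : ℂ))⁻¹ • ((b ^ n) φ₀))
    (hΨ : ∀ n : ℕ, Ψ n = ((Real.sqrt n.factorial : ℂ))⁻¹ • ((ad ^ n) Ψ₀)) :
    ∀ n m : ℕ, ⟪φ n, Ψ m⟫_ℂ = if n = m then 1 else 0 :=
  stmt1_general H D a b ad bd hbD hadD hadj_a hadj_b hcomm φ₀ Ψ₀ hφ₀D hΨ₀D haφ₀ hbdΨ₀ hnorm φ Ψ hφ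
    hΨ
end

section
/- Let H be a complex Hilbert space and (φ̃ₙ), (Ψ̃ₙ) two sequences in H. Let (αₙ) be real numbers with 0 = α₀ < α₁ < α₂ < …, and set ᾱ = supₙ αₙ ∈ (0, ∞]. Assume there exist strictly positive constants A_φ, A_Ψ, r_φ, r_Ψ and strictly positive sequences Mₙ(φ), Mₙ(Ψ) such that Mₙ(φ)/M_{n+1}(φ) → M(φ) and Mₙ(Ψ)/M_{n+1}(Ψ) → M(Ψ) (limits in (0, ∞]), and ‖φ̃ₙ‖ ≤ A_φ r_φⁿ Mₙ(φ), ‖Ψ̃ₙ‖ ≤ A_Ψ r_Ψⁿ Mₙ(Ψ) for all n ≥ 0. Set ρ = ᾱ · min(1, M(φ)/r_φ, M(Ψ)/r_Ψ) (with the convention ∞/r = ∞ and min with ∞ ignored). Then for every z ∈ ℂ with |z| < ρ, the series Σ_{k≥0} |z|^{2k}/(α_k!)² converges, and the series Σ_{k≥0} (z^k/α_k!) φ̃_k and Σ_{k≥0} (z^k/α_k!) Ψ̃_k converge in H, where α₀! = 1 and α_k! = α₁α₂⋯α_k. -/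
/-! As `α_{k+1}! / α_k! = α_{k+1} → ᾱ`, for `|z| < ρ` each series is dominated by a nonnegative
series whose ratio of consecutive terms is eventually below a constant `< 1`. Because `α_{n+1}`
and `M_n / M_{n+1}` may tend to `∞`, the ratio test is run with limits in `ℝ≥0∞`. -/

open Filter Topology
open scoped ENNReal

/-- The generalized factorial `α_k! = α₁ α₂ ⋯ α_k`, with `α₀! = 1`. -/
noncomputable def afact (α : ℕ → ℝ) : ℕ → ℝ
  | 0 => 1
  | n + 1 => afact α n * α (n + 1)

theorem summable_of_succ_mul_le_of_tendsto_ofReal {b d : ℕ → ℝ} {c : ℝ} {L : ℝ≥0∞}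
    (hb : ∀ n, 0 ≤ b n) (hc : 0 ≤ c) (hbd : ∀ᶠ n in atTop, b (n + 1) * d n ≤ c * b n)
    (hd : Tendsto (fun n => ENNReal.ofReal (d n)) atTop (𝓝 L)) (hcL : ENNReal.ofReal c < L) :
    Summable b := by
  obtain ⟨c', hcc', hc'L⟩ := exists_between hcL
  have hc'top : c' ≠ ⊤ := hc'L.ne_top
  have hc'pos : 0 < c'.toReal := ENNReal.toReal_pos (pos_of_gt hcc').ne' hc'top
  have hratio : c / c'.toReal < 1 :=
    (div_lt_one hc'pos).2 ((ENNReal.ofReal_lt_iff_lt_toReal hc hc'top).1 hcc')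
  refine summable_of_ratio_norm_eventually_le hratio ?_
  filter_upwards [hbd, hd.eventually_const_lt hc'L] with n hn hc'd
  have hdn : c'.toReal < d n := (ENNReal.lt_ofReal_iff_toReal_lt hc'top).1 hc'd
  rw [Real.norm_of_nonneg (hb _), Real.norm_of_nonneg (hb _), div_mul_eq_mul_div,
    le_div_iff₀ hc'pos]
  calc b (n + 1) * c'.toReal ≤ b (n + 1) * d n := by gcongr; exact hb _
    _ ≤ c * b n := hn

section afact

variable {α : ℕ → ℝ}

theorem afact_pos (hα : ∀ n, 0 < α (n + 1)) (n : ℕ) : 0 < afact α n := by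
  induction n with
  | zero => exact one_pos
  | succ k ih => exact mul_pos ih (hα k)

theorem afact_pow (m n : ℕ) : afact (fun k => α k ^ m) n = afact α n ^ m := by
  induction n with
  | zero => simp [afact]
  | succ k ih => simp only [afact, ih, mul_pow]

variable {ā : ℝ≥0∞} (hα : ∀ n, 0 < α (n + 1))
  (hαlim : Tendsto (fun n => ENNReal.ofReal (α (n + 1))) atTop (𝓝 ā))
include hα hαlim

theorem summable_pow_mul_div_afact {M : ℕ → ℝ} (hM : ∀ n, 0 < M n) {L : ℝ≥0∞}
    (hML : Tendsto (fun n => ENNReal.ofReal (M n / M (n + 1))) atTop (𝓝 L))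
    {x : ℝ} (hx : 0 ≤ x) (hxL : ENNReal.ofReal x < ā * L) :
    Summable (fun k => x ^ k * M k / afact α k) := by
  obtain ⟨hā, hL⟩ := ENNReal.mul_pos_iff.1 (pos_of_gt hxL)
  have hfact := afact_pos hα
  refine summable_of_succ_mul_le_of_tendsto_ofReal
    (fun k => by have := hM k; have := hfact k; positivity) hx
    (d := fun n => α (n + 1) * (M n / M (n + 1))) (Eventually.of_forall fun n => le_of_eq ?_)
    ?_ hxL
  · have := (hfact n).ne'; have := (hα n).ne'; have := (hM (n + 1)).ne'
    simp only [afact]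
    field_simp
    ring
  · refine (ENNReal.Tendsto.mul hαlim (Or.inl hā.ne') hML (Or.inl hL.ne')).congr fun n => ?_
    rw [ENNReal.ofReal_mul (hα n).le]

theorem summable_pow_two_mul_div_afact_sq {x : ℝ} (hx : 0 ≤ x) (hxā : ENNReal.ofReal x < ā) :
    Summable (fun k => x ^ (2 * k) / afact α k ^ 2) := by
  have hα2lim : Tendsto (fun n => ENNReal.ofReal (α (n + 1) ^ 2)) atTop (𝓝 (ā ^ 2)) := by
    refine (((ENNReal.continuous_pow 2).tendsto ā).comp hαlim).congr fun n => ?_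
    simp only [Function.comp_apply, ENNReal.ofReal_pow (hα n).le]
  have hx2 : ENNReal.ofReal (x ^ 2) < ā ^ 2 * 1 := by
    rw [mul_one, ENNReal.ofReal_pow hx]
    exact ENNReal.pow_lt_pow_left two_ne_zero hxā
  refine (summable_pow_mul_div_afact (α := fun n => α n ^ 2) (M := fun _ => 1)
    (fun n => pow_pos (hα n) 2) hα2lim (fun _ => one_pos) (by simp) (sq_nonneg x) hx2).congr
    fun k => ?_
  rw [afact_pow, pow_mul, mul_one]

theorem summable_pow_div_afact_smul {H : Type*} [NormedAddCommGroup H] [NormedSpace ℂ H]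
    [CompleteSpace H] {v : ℕ → H} {A r : ℝ} (hr : 0 < r) {M : ℕ → ℝ} (hM : ∀ n, 0 < M n)
    {L : ℝ≥0∞} (hML : Tendsto (fun n => ENNReal.ofReal (M n / M (n + 1))) atTop (𝓝 L))
    (hv : ∀ n, ‖v n‖ ≤ A * r ^ n * M n) {z : ℂ}
    (hz : ENNReal.ofReal ‖z‖ < ā * (L / ENNReal.ofReal r)) :
    Summable (fun k => (z ^ k / (afact α k : ℂ)) • v k) := by
  have hzr : ENNReal.ofReal (‖z‖ * r) < ā * L := by
    rwa [ENNReal.ofReal_mul (norm_nonneg z), ← ENNReal.lt_div_iff_mul_lt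
      (Or.inl (ENNReal.ofReal_pos.2 hr).ne') (Or.inl ENNReal.ofReal_ne_top), mul_div_assoc]
  have hsum := summable_pow_mul_div_afact hα hαlim hM hML (by positivity) hzr
  refine (hsum.mul_left A).of_norm_bounded fun k => ?_
  have hfact := afact_pos hα k
  rw [norm_smul, norm_div, norm_pow, Complex.norm_real, Real.norm_of_nonneg hfact.le]
  calc ‖z‖ ^ k / afact α k * ‖v k‖ ≤ ‖z‖ ^ k / afact α k * (A * r ^ k * M k) := by
        gcongr; exact hv k
    _ = A * ((‖z‖ * r) ^ k * M k / afact α k) := by ring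

end afact

theorem stmt2_general (H : Type*) [NormedAddCommGroup H] [InnerProductSpace ℂ H]
    [CompleteSpace H]
    (φt Ψt : ℕ → H) (α : ℕ → ℝ)
    (hα0 : α 0 = 0) (hαmono : StrictMono α)
    (Aφ AΨ rφ rΨ : ℝ) (hrφ : 0 < rφ) (hrΨ : 0 < rΨ)
    (Mφ MΨ : ℕ → ℝ) (hMφpos : ∀ n, 0 < Mφ n) (hMΨpos : ∀ n, 0 < MΨ n)
    (Mφlim MΨlim : ℝ≥0∞)
    (hMφlim : Tendsto (fun n => ENNReal.ofReal (Mφ n / Mφ (n + 1))) atTop (nhds Mφlim))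
    (hMΨlim : Tendsto (fun n => ENNReal.ofReal (MΨ n / MΨ (n + 1))) atTop (nhds MΨlim))
    (hφbd : ∀ n : ℕ, ‖φt n‖ ≤ Aφ * rφ ^ n * Mφ n)
    (hΨbd : ∀ n : ℕ, ‖Ψt n‖ ≤ AΨ * rΨ ^ n * MΨ n)
    (ρ : ℝ≥0∞)
    (hρ : ρ = (⨆ n, ENNReal.ofReal (α n)) *
      min 1 (min (Mφlim / ENNReal.ofReal rφ) (MΨlim / ENNReal.ofReal rΨ))) :
    ∀ z : ℂ, ENNReal.ofReal ‖z‖ < ρ →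
      Summable (fun k : ℕ => ‖z‖ ^ (2 * k) / (afact α k) ^ 2) ∧
      Summable (fun k : ℕ => (z ^ k / (afact α k : ℂ)) • φt k) ∧
      Summable (fun k : ℕ => (z ^ k / (afact α k : ℂ)) • Ψt k) := by
  intro z hz
  rw [hρ] at hz
  have hα : ∀ n, 0 < α (n + 1) := fun n => hα0 ▸ hαmono n.succ_pos
  have hαlim : Tendsto (fun n => ENNReal.ofReal (α (n + 1))) atTop
      (𝓝 (⨆ n, ENNReal.ofReal (α n))) :=
    (tendsto_atTop_iSup fun _ _ h => ENNReal.ofReal_le_ofReal (hαmono.monotone h)).comp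
      (tendsto_add_atTop_nat 1)
  refine ⟨summable_pow_two_mul_div_afact_sq hα hαlim (norm_nonneg z) ?_,
    summable_pow_div_afact_smul hα hαlim hrφ hMφpos hMφlim hφbd ?_,
    summable_pow_div_afact_smul hα hαlim hrΨ hMΨpos hMΨlim hΨbd ?_⟩ <;>
    refine hz.trans_le ?_
  · exact mul_le_of_le_one_right' (min_le_left _ _)
  · exact mul_le_mul_right ((min_le_right _ _).trans (min_le_left _ _)) _
  · exact mul_le_mul_right ((min_le_right _ _).trans (min_le_right _ _)) _

/-- convergence of the bi-coherent state series inside the disc of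
radius `ρ = ᾱ · min(1, M(φ)/r_φ, M(Ψ)/r_Ψ)`. -/
theorem stmt2 (H : Type*) [NormedAddCommGroup H] [InnerProductSpace ℂ H]
    [CompleteSpace H]
    (φt Ψt : ℕ → H) (α : ℕ → ℝ)
    (hα0 : α 0 = 0) (hαmono : StrictMono α)
    (Aφ AΨ rφ rΨ : ℝ) (hAφ : 0 < Aφ) (hAΨ : 0 < AΨ) (hrφ : 0 < rφ) (hrΨ : 0 < rΨ)
    (Mφ MΨ : ℕ → ℝ) (hMφpos : ∀ n, 0 < Mφ n) (hMΨpos : ∀ n, 0 < MΨ n)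
    (Mφlim MΨlim : ℝ≥0∞) (hMφne : Mφlim ≠ 0) (hMΨne : MΨlim ≠ 0)
    (hMφlim : Tendsto (fun n => ENNReal.ofReal (Mφ n / Mφ (n + 1))) atTop (nhds Mφlim))
    (hMΨlim : Tendsto (fun n => ENNReal.ofReal (MΨ n / MΨ (n + 1))) atTop (nhds MΨlim))
    (hφbd : ∀ n : ℕ, ‖φt n‖ ≤ Aφ * rφ ^ n * Mφ n)
    (hΨbd : ∀ n : ℕ, ‖Ψt n‖ ≤ AΨ * rΨ ^ n * MΨ n)
    (ρ : ℝ≥0∞)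
    (hρ : ρ = (⨆ n, ENNReal.ofReal (α n)) *
      min 1 (min (Mφlim / ENNReal.ofReal rφ) (MΨlim / ENNReal.ofReal rΨ))) :
    ∀ z : ℂ, ENNReal.ofReal ‖z‖ < ρ →
      Summable (fun k : ℕ => ‖z‖ ^ (2 * k) / (afact α k) ^ 2) ∧
      Summable (fun k : ℕ => (z ^ k / (afact α k : ℂ)) • φt k) ∧
      Summable (fun k : ℕ => (z ^ k / (afact α k : ℂ)) • Ψt k) :=
  stmt2_general H φt Ψt α hα0 hαmono Aφ AΨ rφ rΨ hrφ hrΨ Mφ MΨ hMφpos hMΨpos Mφlim MΨlim hMφlim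
    hMΨlim hφbd hΨbd ρ hρ
end

section
/- Let α_a, α_b : ℝ → ℂ be twice differentiable and β_a, β_b : ℝ → ℂ be differentiable, and suppose that for all x ∈ ℝ: α_a(x) α_b′(x) = α_a′(x) α_b(x) and α_a(x) β_b′(x) + α_b(x) β_a′(x) = 1 + α_a(x) α_b″(x). Define, for twice differentiable f : ℝ → ℂ, (a f)(x) = α_a(x) f′(x) + β_a(x) f(x) and (b f)(x) = −(α_b f)′(x) + β_b(x) f(x). Then for every twice differentiable f : ℝ → ℂ and every x ∈ ℝ, (a(b f))(x) − (b(a f))(x) = f(x). -/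
/-- the conditions `α_a α_b' = α_a' α_b` and
`α_a β_b' + α_b β_a' = 1 + α_a α_b''` make the first order differential
operators `a = α_a d/dx + β_a` and `b = −(d/dx) α_b + β_b` satisfy the
pseudo-bosonic commutation relation `[a, b] = 1` on `C²` functions. -/
theorem stmt4 (αa αb βa βb : ℝ → ℂ)
    (hαa : Differentiable ℝ αa) (hαa' : Differentiable ℝ (deriv αa))
    (hαb : Differentiable ℝ αb) (hαb' : Differentiable ℝ (deriv αb))
    (hβa : Differentiable ℝ βa) (hβb : Differentiable ℝ βb)
    (hcond1 : ∀ x : ℝ, αa x * deriv αb x = deriv αa x * αb x)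
    (hcond2 : ∀ x : ℝ, αa x * deriv βb x + αb x * deriv βa x
      = 1 + αa x * deriv (deriv αb) x)
    (a b : (ℝ → ℂ) → (ℝ → ℂ))
    (ha : ∀ f : ℝ → ℂ, a f = fun x => αa x * deriv f x + βa x * f x)
    (hb : ∀ f : ℝ → ℂ, b f = fun x => -(deriv (fun t => αb t * f t) x) + βb x * f x) :
    ∀ f : ℝ → ℂ, Differentiable ℝ f → Differentiable ℝ (deriv f) →
      ∀ x : ℝ, a (b f) x - b (a f) x = f x := by
  intro f hf hf' x
  -- derivative of αb * f as a function
  have hbd : deriv (fun t => αb t * f t)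
      = fun t => deriv αb t * f t + αb t * deriv f t := by
    funext t
    exact ((hαb t).hasDerivAt.mul (hf t).hasDerivAt).deriv
  have hbf : b f = fun t => -(deriv αb t * f t + αb t * deriv f t) + βb t * f t := by
    rw [hb f, hbd]
  -- derivative of b f at x
  have h1 : HasDerivAt (fun t => deriv αb t * f t)
      (deriv (deriv αb) x * f x + deriv αb x * deriv f x) x :=
    (hαb' x).hasDerivAt.mul (hf x).hasDerivAt
  have h2 : HasDerivAt (fun t => αb t * deriv f t)
      (deriv αb x * deriv f x + αb x * deriv (deriv f) x) x :=
    (hαb x).hasDerivAt.mul (hf' x).hasDerivAt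
  have h3 : HasDerivAt (fun t => βb t * f t)
      (deriv βb x * f x + βb x * deriv f x) x :=
    (hβb x).hasDerivAt.mul (hf x).hasDerivAt
  have hdbf : deriv (b f) x
      = -((deriv (deriv αb) x * f x + deriv αb x * deriv f x)
          + (deriv αb x * deriv f x + αb x * deriv (deriv f) x))
        + (deriv βb x * f x + βb x * deriv f x) := by
    rw [hbf]
    exact (((h1.add h2).neg).add h3).deriv
  -- derivative of a f at x
  have haaf : HasDerivAt (a f)
      ((deriv αa x * deriv f x + αa x * deriv (deriv f) x)
        + (deriv βa x * f x + βa x * deriv f x)) x := by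
    rw [ha f]
    exact ((hαa x).hasDerivAt.mul (hf' x).hasDerivAt).add
      ((hβa x).hasDerivAt.mul (hf x).hasDerivAt)
  -- derivative of αb * a f at x
  have hd2 : deriv (fun t => αb t * a f t) x
      = deriv αb x * a f x + αb x * ((deriv αa x * deriv f x + αa x * deriv (deriv f) x)
        + (deriv βa x * f x + βa x * deriv f x)) :=
    ((hαb x).hasDerivAt.mul haaf).deriv
  have hafx : a f x = αa x * deriv f x + βa x * f x := by rw [ha f]
  have hbfx : b f x = -(deriv αb x * f x + αb x * deriv f x) + βb x * f x := by
    rw [hbf]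
  have habf : a (b f) x = αa x * deriv (b f) x + βa x * b f x := by rw [ha (b f)]
  have hbaf : b (a f) x = -(deriv (fun t => αb t * a f t) x) + βb x * a f x := by
    rw [hb (a f)]
  rw [habf, hbaf, hdbf, hd2, hbfx, hafx]
  linear_combination f x * hcond2 x - deriv f x * hcond1 x
end

section
/- Let α_a, α_b, β_a, β_b : ℝ → ℂ be C^∞ with α_a(x) ≠ 0 and α_b(x) ≠ 0 for all x, and set θ(x) = α_a(x)β_b(x) + α_b(x)β_a(x). Let φ₀ : ℝ → ℂ be C^∞ with α_a(x)φ₀′(x) + β_a(x)φ₀(x) = 0 for all x, and let ψ₀ : ℝ → ℂ be C^∞ with conj(α_b(x))ψ₀′(x) + conj(β_b(x))ψ₀(x) = 0 for all x. Define the operator (b f)(x) = −(α_b f)′(x) + β_b(x) f(x) and (a† f)(x) = −(conj(α_a) f)′(x) + conj(β_a(x)) f(x). Define πₙ, σₙ : ℝ → ℂ by π₀ = σ₀ = 1, πₙ = (θ/α_a − α_b′) π_{n−1} − α_b π_{n−1}′ and σₙ = conj(θ/α_b − α_a′) σ_{n−1} − conj(α_a) σ_{n−1}′ for n ≥ 1.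 Then for every n ≥ 0, bⁿ φ₀ = πₙ φ₀ and (a†)ⁿ ψ₀ = σₙ ψ₀; equivalently φₙ := (1/√(n!)) bⁿ φ₀ = (1/√(n!)) πₙ φ₀ and ψₙ := (1/√(n!)) (a†)ⁿ ψ₀ = (1/√(n!)) σₙ ψ₀. -/
open Complex

/-- the pseudo-bosonic excited states are obtained from the vacua
by multiplication by the recursively defined functions `πₙ` and `σₙ`:
`bⁿ φ₀ = πₙ φ₀` and `(a†)ⁿ ψ₀ = σₙ ψ₀`. -/
theorem stmt5 (αa αb βa βb : ℝ → ℂ)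
    (hαa : ContDiff ℝ (⊤ : ℕ∞) αa) (hαb : ContDiff ℝ (⊤ : ℕ∞) αb)
    (hβa : ContDiff ℝ (⊤ : ℕ∞) βa) (hβb : ContDiff ℝ (⊤ : ℕ∞) βb)
    (hαane : ∀ x : ℝ, αa x ≠ 0) (hαbne : ∀ x : ℝ, αb x ≠ 0)
    (θ : ℝ → ℂ) (hθ : ∀ x : ℝ, θ x = αa x * βb x + αb x * βa x)
    (φ₀ ψ₀ : ℝ → ℂ) (hφ₀ : ContDiff ℝ (⊤ : ℕ∞) φ₀) (hψ₀ : ContDiff ℝ (⊤ : ℕ∞) ψ₀)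
    (hvacφ : ∀ x : ℝ, αa x * deriv φ₀ x + βa x * φ₀ x = 0)
    (hvacψ : ∀ x : ℝ, (starRingEnd ℂ) (αb x) * deriv ψ₀ x
      + (starRingEnd ℂ) (βb x) * ψ₀ x = 0)
    (b ad : (ℝ → ℂ) → (ℝ → ℂ))
    (hbdef : ∀ f : ℝ → ℂ, b f = fun x => -(deriv (fun t => αb t * f t) x) + βb x * f x)
    (haddef : ∀ f : ℝ → ℂ, ad f =
      fun x => -(deriv (fun t => (starRingEnd ℂ) (αa t) * f t) x)
        + (starRingEnd ℂ) (βa x) * f x)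
    (π σ : ℕ → ℝ → ℂ)
    (hπ0 : π 0 = fun _ => 1) (hσ0 : σ 0 = fun _ => 1)
    (hπ : ∀ n : ℕ, 1 ≤ n → π n =
      fun x => (θ x / αa x - deriv αb x) * π (n - 1) x - αb x * deriv (π (n - 1)) x)
    (hσ : ∀ n : ℕ, 1 ≤ n → σ n =
      fun x => (starRingEnd ℂ) (θ x / αb x - deriv αa x) * σ (n - 1) x
        - (starRingEnd ℂ) (αa x) * deriv (σ (n - 1)) x) :
    ∀ n : ℕ,
      (b^[n] φ₀ = fun x => π n x * φ₀ x) ∧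
      (ad^[n] ψ₀ = fun x => σ n x * ψ₀ x) ∧
      ((Real.sqrt n.factorial : ℂ)⁻¹ • b^[n] φ₀
        = fun x => (Real.sqrt n.factorial : ℂ)⁻¹ * π n x * φ₀ x) ∧
      ((Real.sqrt n.factorial : ℂ)⁻¹ • ad^[n] ψ₀
        = fun x => (Real.sqrt n.factorial : ℂ)⁻¹ * σ n x * ψ₀ x) := by
  -- derivative of a smooth function is smooth
  have hderivCD : ∀ f : ℝ → ℂ, ContDiff ℝ (⊤ : ℕ∞) f → ContDiff ℝ (⊤ : ℕ∞) (deriv f) := by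
    intro f hf
    have h : ContDiff ℝ (((⊤ : ℕ∞) : WithTop ℕ∞) + 1) f := hf
    simpa using (contDiff_succ_iff_deriv.mp h).2.2
  have hθCD : ContDiff ℝ (⊤ : ℕ∞) θ := by
    have : θ = fun x => αa x * βb x + αb x * βa x := funext hθ
    rw [this]; exact (hαa.mul hβb).add (hαb.mul hβa)
  have hdiva : ContDiff ℝ (⊤ : ℕ∞) (fun x => θ x / αa x) := by
    simp only [div_eq_mul_inv]; exact hθCD.mul (hαa.inv hαane)
  have hdivb : ContDiff ℝ (⊤ : ℕ∞) (fun x => θ x / αb x) := by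
    simp only [div_eq_mul_inv]; exact hθCD.mul (hαb.inv hαbne)
  have hconjαa : ContDiff ℝ (⊤ : ℕ∞) (fun x => (starRingEnd ℂ) (αa x)) :=
    Complex.conjCLE.contDiff.comp hαa
  have hαbcne : ∀ x : ℝ, (starRingEnd ℂ) (αb x) ≠ 0 := fun x => by
    simpa using hαbne x
  have dφ := hφ₀.differentiable (by simp)
  have dψ := hψ₀.differentiable (by simp)
  have dαa := hαa.differentiable (by simp)
  have dαb := hαb.differentiable (by simp)
  have dcαa := hconjαa.differentiable (by simp)
  -- the main induction, carrying smoothness of `π n` and `σ n`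
  have key : ∀ n : ℕ, (b^[n] φ₀ = fun x => π n x * φ₀ x) ∧ ContDiff ℝ (⊤ : ℕ∞) (π n) ∧
      (ad^[n] ψ₀ = fun x => σ n x * ψ₀ x) ∧ ContDiff ℝ (⊤ : ℕ∞) (σ n) := by
    intro n
    induction n with
    | zero =>
      refine ⟨?_, ?_, ?_, ?_⟩
      · funext x; simp [hπ0]
      · rw [hπ0]; exact contDiff_const
      · funext x; simp [hσ0]
      · rw [hσ0]; exact contDiff_const
    | succ n ih =>
      obtain ⟨ihb, ihπcd, ihad, ihσcd⟩ := ih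
      have dπ := ihπcd.differentiable (by simp)
      have dσ := ihσcd.differentiable (by simp)
      have hπrec := hπ (n + 1) (by omega)
      have hσrec := hσ (n + 1) (by omega)
      simp only [Nat.add_sub_cancel] at hπrec hσrec
      constructor
      · -- b step
        rw [Function.iterate_succ_apply', ihb, hbdef]
        funext x
        have hd1 : deriv (fun t => αb t * (π n t * φ₀ t)) x
            = deriv αb x * (π n x * φ₀ x)
              + αb x * (deriv (π n) x * φ₀ x + π n x * deriv φ₀ x) := by
          rw [deriv_fun_mul (d := fun t => π n t * φ₀ t) (dαb x) ((dπ x).mul (dφ x)), deriv_fun_mul (dπ x) (dφ x)]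
        have hdφ : deriv φ₀ x = -(βa x * φ₀ x) / αa x := by
          rw [eq_div_iff (hαane x)]; linear_combination hvacφ x
        simp only [hd1, hπrec, hdφ, hθ x]
        field_simp [hαane x]
        ring
      refine ⟨?_, ?_, ?_⟩
      · -- σ (n+1) is smooth (proved before the `ad` step since we also need it here)
        rw [hπrec]
        exact ((hdiva.sub (hderivCD _ hαb)).mul ihπcd).sub
          (hαb.mul (hderivCD _ ihπcd))
      · -- ad step
        rw [Function.iterate_succ_apply', ihad, haddef]
        funext x
        have hd1 : deriv (fun t => (starRingEnd ℂ) (αa t) * (σ n t * ψ₀ t)) x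
            = (starRingEnd ℂ) (deriv αa x) * (σ n x * ψ₀ x)
              + (starRingEnd ℂ) (αa x) * (deriv (σ n) x * ψ₀ x + σ n x * deriv ψ₀ x) := by
          rw [deriv_fun_mul (d := fun t => σ n t * ψ₀ t) (dcαa x) ((dσ x).mul (dψ x)), deriv_fun_mul (dσ x) (dψ x)]
          congr 1
          congr 1
          exact deriv.star
        have hdψ : deriv ψ₀ x = -((starRingEnd ℂ) (βb x) * ψ₀ x) / (starRingEnd ℂ) (αb x) := by
          rw [eq_div_iff (hαbcne x)]; linear_combination hvacψ x
        simp only [hd1, hσrec, hdψ, hθ x, map_sub, map_div₀, map_add, map_mul]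
        field_simp [hαbcne x]
        ring
      · rw [hσrec]
        refine ((Complex.conjCLE.contDiff.comp ?_).mul ihσcd).sub
          (hconjαa.mul (hderivCD _ ihσcd))
        exact hdivb.sub (hderivCD _ hαa)
  intro n
  obtain ⟨h1, _, h2, _⟩ := key n
  refine ⟨h1, h2, ?_, ?_⟩
  · rw [h1]; funext x; simp [mul_assoc]
  · rw [h2]; funext x; simp [mul_assoc]
end
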